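/- arXiv:2505.08140 — 2 statements merged into one kernel-verified Lean document; each statement's English description precedes it below -/
import Mathlib

section
/- Fix ε ∈ (0,1) and functions a, b : ℕ → ℕ with a(n) = o(log n) and b(n) = o(n^{1−ε}). Then for all sufficiently large n, there is no (a(n), b(n))-BAPO that solves Majority on all inputs of length n. -/
/-!
Split the input after `k = n - ⌊n/2⌋` tokens. Take `r = 2^a + 1` prefixes, prefix `c` having
`τ c = β + c + 1` ones, and suffixes of length `⌊n/2⌋` with `τ i` zeros, so that prefix `c`
followed by suffix `i` has a strict majority of ones iff `i < c`. By pigeonhole two prefixes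
`i < j` receive the same `a`-bit message. The prefixes are built to agree on a core of
`β = r² b` positions: for each suffix, either all positions the attention function can select
lie in the core (so both prefixes have the same candidate set), or `b` core positions, disjoint
from those of the other suffixes, are reserved for it and filled with tokens it attends to
(a common attended set of full size `b`). Either way the suffix oracle
cannot distinguish prefix `i` from prefix `j` on suffix `i`, although the answers differ.
The growth hypotheses give `4^a b = o(n)`, so the core fits into the prefix.
-/

open Finset Filter Asymptotics

/-- An `(a, b)`-BAPO (bounded attention prefix oracle): a prefix oracle `f` outputting
`a` bits, a binary attention function `g`, and a suffix oracle `h` that receives the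
prefix-oracle output, an attended set of at most `b` (token, 1-based index) pairs from
the prefix, the suffix, and the split index. -/
structure BAPO (Sigma : Type) (Out : Type) (a b : ℕ) where
  f : List Sigma → (Fin a → Bool)
  g : List Sigma → ℕ → Sigma → ℕ → Bool
  h : (Fin a → Bool) → Finset (Sigma × ℕ) → List Sigma → ℕ → Out

namespace BAPO

variable {Sigma Out : Type} {a b : ℕ}

/-- The set `𝔾 = {(xᵢ, i) : 1 ≤ i ≤ k, g(suffix, k, xᵢ, i) = 1}` of attended
candidates for a given prefix and suffix. -/
noncomputable def cands (M : BAPO Sigma Out a b) (pre suf : List Sigma) :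
    Finset (Sigma × ℕ) :=
  letI := Classical.decEq Sigma
  (Finset.univ.filter fun i : Fin pre.length =>
      M.g suf pre.length (pre.get i) ((i : ℕ) + 1) = true).image
    fun i => (pre.get i, (i : ℕ) + 1)

/-- The BAPO outputs `y` on input `x`: for every split index `k < |x|` and every
attended set `G ⊆ 𝔾` with `|G| = min b |𝔾|`, the suffix oracle outputs `y`. -/
def SolvesOn (M : BAPO Sigma Out a b) (x : List Sigma) (y : Out) : Prop :=
  ∀ k, k < x.length →
    ∀ G : Finset (Sigma × ℕ), G ⊆ M.cands (x.take k) (x.drop k) →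
      G.card = min b (M.cands (x.take k) (x.drop k)).card →
      M.h (M.f (x.take k)) G (x.drop k) k = y

/-- The BAPO outputs a *correct* answer (one satisfying `good`) on input `x`:
for every split index `k < |x|` and every attended set `G ⊆ 𝔾` with
`|G| = min b |𝔾|`, the suffix oracle's output satisfies `good`. -/
def SolvesOnP (M : BAPO Sigma Out a b) (x : List Sigma) (good : Out → Prop) : Prop :=
  ∀ k, k < x.length →
    ∀ G : Finset (Sigma × ℕ), G ⊆ M.cands (x.take k) (x.drop k) →
      G.card = min b (M.cands (x.take k) (x.drop k)).card →
      good (M.h (M.f (x.take k)) G (x.drop k) k)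

end BAPO

theorem List.count_ofFn {α : Type*} [DecidableEq α] {k : ℕ} (f : Fin k → α) (y : α) :
    (List.ofFn f).count y = #{i | f i = y} := by
  induction k with
  | zero => simp
  | succ k ih =>
    rw [List.ofFn_succ, List.count_cons, ih, Fin.card_filter_univ_succ' (fun i => f i = y)]
    by_cases h : f 0 = y <;> simp [h, add_comm]

theorem Finset.exists_pairwiseDisjoint_subset_card_eq {ι α : Type*} (s : Finset ι)
    (U : ι → Finset α) (c : ℕ) (hU : ∀ i ∈ s, #s * c ≤ #(U i)) :
    ∃ S : ι → Finset α, (∀ i ∈ s, S i ⊆ U i ∧ #(S i) = c) ∧ (s : Set ι).PairwiseDisjoint S := by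
  classical
  induction s using Finset.induction_on with
  | empty => exact ⟨fun _ => ∅, by simp, by simp⟩
  | insert i s hi ih =>
    rw [card_insert_of_notMem hi] at hU
    obtain ⟨S, hSU, hdisj⟩ := ih fun j hj =>
      le_trans (Nat.mul_le_mul_right c (Nat.le_succ _)) (hU j (mem_insert_of_mem hj))
    have hroom : c ≤ #(U i \ s.biUnion S) := by
      have hused : #(s.biUnion S) ≤ #s * c :=
        card_biUnion_le.trans (by rw [sum_congr rfl fun j hj => (hSU j hj).2]; simp)
      have := le_card_sdiff (s.biUnion S) (U i)
      have := hU i (mem_insert_self i s)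
      rw [Nat.succ_mul] at this
      omega
    obtain ⟨T, hTU, hTc⟩ := exists_subset_card_eq hroom
    have hS : ∀ j ∈ s, Function.update S i T j = S j := fun j hj =>
      Function.update_of_ne (ne_of_mem_of_not_mem hj hi) _ _
    refine ⟨Function.update S i T, ?_, ?_⟩
    · intro j hj
      rcases mem_insert.1 hj with rfl | hj
      · simpa using ⟨(hTU.trans sdiff_subset), hTc⟩
      · rw [hS j hj]; exact hSU j hj
    · rw [coe_insert]
      refine Set.PairwiseDisjoint.insert_of_notMem ?_ hi fun j hj => ?_
      · intro x hx y hy hxy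
        simp only [Function.onFun, hS x hx, hS y hy]
        exact hdisj hx hy hxy
      · rw [Function.update_self, hS j hj]
        exact disjoint_of_subset_left hTU (sdiff_disjoint.mono_right (subset_biUnion_of_mem S hj))

namespace BAPO

variable {Sigma Out : Type} {a b : ℕ}

def IsAttendedSet (M : BAPO Sigma Out a b) (pre suf : List Sigma) (G : Finset (Sigma × ℕ)) :
    Prop :=
  G ⊆ M.cands pre suf ∧ #G = min b #(M.cands pre suf)

theorem exists_isAttendedSet (M : BAPO Sigma Out a b) (pre suf : List Sigma) :
    ∃ G, M.IsAttendedSet pre suf G :=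
  exists_subset_card_eq (min_le_right _ _)

theorem isAttendedSet_of_card_eq {M : BAPO Sigma Out a b} {pre suf : List Sigma}
    {G : Finset (Sigma × ℕ)} (hG : G ⊆ M.cands pre suf) (hcard : #G = b) :
    M.IsAttendedSet pre suf G :=
  have hb : b ≤ #(M.cands pre suf) := hcard.symm.trans_le (card_le_card hG)
  ⟨hG, by rw [hcard, min_eq_left hb]⟩

theorem SolvesOn.eq_of_f_eq {M : BAPO Sigma Out a b} {pre pre' suf : List Sigma} {y y' : Out}
    (h : M.SolvesOn (pre ++ suf) y) (h' : M.SolvesOn (pre' ++ suf) y')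
    (hlen : pre.length = pre'.length) (hsuf : suf ≠ []) (hf : M.f pre = M.f pre')
    {G : Finset (Sigma × ℕ)} (hG : M.IsAttendedSet pre suf G)
    (hG' : M.IsAttendedSet pre' suf G) : y = y' := by
  have hpos : 0 < suf.length := List.length_pos_iff.mpr hsuf
  have e := h pre.length (by simp [hpos]) G (by simpa using hG.1) (by simpa using hG.2)
  have e' := h' pre'.length (by simp [hpos]) G (by simpa using hG'.1) (by simpa using hG'.2)
  simp only [List.take_left, List.drop_left] at e e'
  rw [← e, ← e', hf, hlen]

section OfFn

variable [DecidableEq Sigma] {k : ℕ}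

theorem cands_ofFn (M : BAPO Sigma Out a b) (χ : Fin k → Sigma) (suf : List Sigma) :
    M.cands (List.ofFn χ) suf =
      (univ.filter fun p : Fin k => M.g suf k (χ p) ((p : ℕ) + 1) = true).image
        fun p => (χ p, (p : ℕ) + 1) := by
  ext y
  simp only [cands, mem_image, mem_filter, mem_univ, true_and, List.get_ofFn]
  constructor
  · rintro ⟨i, hg, rfl⟩
    exact ⟨Fin.cast List.length_ofFn i, by simpa using hg, by simp⟩
  · rintro ⟨p, hg, rfl⟩
    exact ⟨Fin.cast List.length_ofFn.symm p, by simpa using hg, by simp⟩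

theorem cands_ofFn_congr (M : BAPO Sigma Out a b) {χ χ' : Fin k → Sigma} {suf : List Sigma}
    (h : ∀ (p : Fin k) σ, M.g suf k σ ((p : ℕ) + 1) = true → χ p = χ' p) :
    M.cands (List.ofFn χ) suf = M.cands (List.ofFn χ') suf := by
  rw [cands_ofFn, cands_ofFn]
  ext y
  simp only [mem_image, mem_filter, mem_univ, true_and]
  constructor <;> rintro ⟨p, hg, rfl⟩ <;> have e := h p _ hg <;> exact ⟨p, e ▸ hg, by rw [e]⟩

theorem image_subset_cands_ofFn (M : BAPO Sigma Out a b) {χ : Fin k → Sigma} {suf : List Sigma}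
    {S : Finset (Fin k)} (h : ∀ p ∈ S, M.g suf k (χ p) ((p : ℕ) + 1) = true) :
    S.image (fun p => (χ p, (p : ℕ) + 1)) ⊆ M.cands (List.ofFn χ) suf := by
  rw [cands_ofFn]
  exact image_subset_image fun p hp => by simpa using h p hp

end OfFn

theorem exists_core_pattern [Nonempty Sigma] (M : BAPO Sigma Out a b) (k : ℕ) {ι : Type*}
    [Fintype ι] (suf : ι → List Sigma) :
    ∃ (B : Finset (Fin k)) (π : Fin k → Sigma), #B ≤ Fintype.card ι ^ 2 * b ∧
      ∀ i (χ χ' : Fin k → Sigma), (∀ p ∈ B, χ p = π p) → (∀ p ∈ B, χ' p = π p) →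
        ∃ G, M.IsAttendedSet (List.ofFn χ) (suf i) G ∧
          M.IsAttendedSet (List.ofFn χ') (suf i) G := by
  classical
  set r := Fintype.card ι
  let U i : Finset (Fin k) := {p | ∃ σ, M.g (suf i) k σ ((p : ℕ) + 1) = true}
  -- a suffix with fewer than `r * b` selectable positions has all of them put into the core
  let big : Finset ι := {i | r * b ≤ #(U i)}
  obtain ⟨S, hSU, hdisj⟩ := exists_pairwiseDisjoint_subset_card_eq big U b fun i hi =>
    (Nat.mul_le_mul_right b (card_le_univ big)).trans (mem_filter.1 hi).2
  let π (p : Fin k) : Sigma :=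
    Classical.epsilon fun σ => ∃ i ∈ big, p ∈ S i ∧ M.g (suf i) k σ ((p : ℕ) + 1) = true
  have hπ : ∀ i ∈ big, ∀ p ∈ S i, M.g (suf i) k (π p) ((p : ℕ) + 1) = true := by
    intro i hi p hp
    obtain ⟨σ, hσ⟩ := (mem_filter.1 ((hSU i hi).1 hp)).2
    obtain ⟨j, hj, hpj, hg⟩ := Classical.epsilon_spec
      (p := fun σ => ∃ j ∈ big, p ∈ S j ∧ M.g (suf j) k σ ((p : ℕ) + 1) = true) ⟨σ, i, hi, hp, hσ⟩
    rwa [hdisj.elim_finset hj hi p hpj hp] at hg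
  set B : Finset (Fin k) := univ.biUnion fun i => if i ∈ big then S i else U i
  have hmemB : ∀ i, ∀ p ∈ (if i ∈ big then S i else U i), p ∈ B :=
    fun i p hp => mem_biUnion.2 ⟨i, mem_univ i, hp⟩
  refine ⟨B, π, ?_, fun i χ χ' hχ hχ' => ?_⟩
  · refine card_biUnion_le.trans ((sum_le_card_nsmul _ _ (r * b) fun i _ => ?_).trans ?_)
    · split_ifs with hi
      · rw [(hSU i hi).2]
        exact Nat.le_mul_of_pos_left b (Fintype.card_pos_iff.2 ⟨i⟩)
      · exact (not_le.1 fun h => hi (mem_filter.2 ⟨mem_univ i, h⟩)).le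
    · simp [r, sq, mul_assoc]
  by_cases hi : i ∈ big
  · let G := (S i).image fun p => (π p, (p : ℕ) + 1)
    have hG : ∀ ψ : Fin k → Sigma, (∀ p ∈ B, ψ p = π p) →
        M.IsAttendedSet (List.ofFn ψ) (suf i) G := by
      intro ψ hψ
      have hψS : ∀ p ∈ S i, ψ p = π p := fun p hp => hψ p (hmemB i p (by simpa [hi] using hp))
      refine isAttendedSet_of_card_eq ?_ ?_
      · rw [show G = (S i).image fun p => (ψ p, (p : ℕ) + 1) from
          image_congr fun p hp => by simp [hψS p hp]]
        exact image_subset_cands_ofFn M fun p hp => hψS p hp ▸ hπ i hi p hp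
      · rw [card_image_of_injective _ fun p q h => Fin.ext (by simpa using congrArg Prod.snd h),
          (hSU i hi).2]
    exact ⟨G, hG χ hχ, hG χ' hχ'⟩
  · have hUB : ∀ (p : Fin k) σ, M.g (suf i) k σ ((p : ℕ) + 1) = true → p ∈ B :=
      fun p σ hσ => hmemB i p (by simpa [hi, U] using ⟨σ, hσ⟩)
    have hcands : M.cands (List.ofFn χ) (suf i) = M.cands (List.ofFn χ') (suf i) :=
      cands_ofFn_congr M fun p σ hσ => (hχ p (hUB p σ hσ)).trans (hχ' p (hUB p σ hσ)).symm
    obtain ⟨G, hG⟩ := M.exists_isAttendedSet (List.ofFn χ) (suf i)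
    exact ⟨G, hG, by simpa only [IsAttendedSet, hcands] using hG⟩

end BAPO

theorem exists_ofFn_eqOn_count_true_eq {k : ℕ} (B : Finset (Fin k)) (π : Fin k → Bool) {c : ℕ}
    (hB : #B ≤ c) (hc : c + #B ≤ k) :
    ∃ χ : Fin k → Bool, (∀ p ∈ B, χ p = π p) ∧ (List.ofFn χ).count true = c := by
  classical
  let O := B.filter (π · = true)
  have hO : #O ≤ #B := card_filter_le _ _
  obtain ⟨F, hF, hFc⟩ := exists_subset_card_eq (s := univ \ B) (n := c - #O) (by
    rw [card_univ_sdiff, Fintype.card_fin]; omega)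
  refine ⟨fun p => if p ∈ B then π p else decide (p ∈ F), fun p hp => if_pos hp, ?_⟩
  have hones : ({p | (if p ∈ B then π p else decide (p ∈ F)) = true} : Finset (Fin k)) = O ∪ F := by
    ext p
    by_cases hp : p ∈ B
    · have : p ∉ F := fun h => (mem_sdiff.1 (hF h)).2 hp
      simp [O, hp, this]
    · simp [O, hp]
  have hdisj : Disjoint O F :=
    disjoint_of_subset_left (filter_subset _ _) (disjoint_of_subset_right hF disjoint_sdiff)
  rw [List.count_ofFn, hones, card_union_of_disjoint hdisj, hFc]
  omega

theorem not_exists_solvesOn_majority {A b n : ℕ} (h : 16 * 4 ^ A * (b + 1) ≤ n) :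
    ¬ ∃ M : BAPO Bool Bool A b, ∀ x : List Bool, x.length = n →
        M.SolvesOn x (decide (x.count false < x.count true)) := by
  rintro ⟨M, hM⟩
  set r := 2 ^ A + 1
  set β := r ^ 2 * b
  set m := n / 2
  set k := n - m
  have hroom : 2 * β + r ≤ m := by
    have h4 : (2 ^ A) ^ 2 = 4 ^ A := by rw [← pow_mul, mul_comm, pow_mul]; norm_num
    have h1 : 1 ≤ 2 ^ A := Nat.one_le_two_pow
    have hr : r ^ 2 ≤ 4 * 4 ^ A := by
      rw [← h4]
      have : r ≤ 2 * 2 ^ A := by omega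
      nlinarith
    calc 2 * β + r ≤ 2 * β + r ^ 2 := by gcongr; exact Nat.le_self_pow two_ne_zero r
      _ ≤ 2 * (4 * 4 ^ A * b) + 4 * 4 ^ A := by simp only [β]; gcongr
      _ ≤ m := (Nat.le_div_iff_mul_le two_pos).2 (by nlinarith)
  let τ (c : Fin r) : ℕ := β + c + 1
  let suf (t : ℕ) : List Bool := List.replicate (m - t) true ++ List.replicate t false
  obtain ⟨B, π, hB, hcore⟩ := M.exists_core_pattern k fun i : Fin r => suf (τ i)
  rw [Fintype.card_fin] at hB
  have hτ (c : Fin r) : β < τ c ∧ τ c ≤ β + r := by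
    have := c.isLt
    constructor <;> simp only [τ] <;> omega
  choose χ hχB hχ using fun c : Fin r =>
    exists_ofFn_eqOn_count_true_eq B π (c := τ c) (by grind) (by grind)
  have hmaj : ∀ c i : Fin r, M.SolvesOn (List.ofFn (χ c) ++ suf (τ i)) (decide (i < c)) := by
    intro c i
    have hτi := hτ i
    have hk : (List.ofFn (χ c)).count false + τ c = k := by
      rw [← hχ c, List.count_false_add_count_true, List.length_ofFn]
    have hlen : (List.ofFn (χ c) ++ suf (τ i)).length = n := by simp [suf]; omega
    convert hM _ hlen using 2
    simp only [suf, List.count_append, List.count_replicate, hχ c]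
    simp only [τ, Fin.lt_def] at hk ⊢
    grind
  obtain ⟨i, j, hne, hf⟩ :=
    Fintype.exists_ne_map_eq_of_card_lt (fun c : Fin r => M.f (List.ofFn (χ c))) (by simp [r])
  wlog hij : i < j generalizing i j
  · exact this j i hne.symm hf.symm (hne.lt_or_gt.resolve_left hij)
  obtain ⟨G, hG, hG'⟩ := hcore i (χ i) (χ j) (hχB i) (hχB j)
  have := (hmaj i i).eq_of_f_eq (hmaj j i) (by simp) (by simp [suf, τ]) hf hG hG'
  simp [hij] at this

theorem eventually_pow_le_rpow_of_isLittleO_log {a : ℕ → ℕ}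
    (ha : (fun n : ℕ => (a n : ℝ)) =o[atTop] fun n : ℕ => Real.log n) {c δ : ℝ} (hc : 1 < c)
    (hδ : 0 < δ) : ∀ᶠ n : ℕ in atTop, c ^ a n ≤ (n : ℝ) ^ δ := by
  have hlogc := Real.log_pos hc
  filter_upwards [ha.def (div_pos hδ hlogc), eventually_ge_atTop 1] with n hn hn1
  have hn1 : (1 : ℝ) ≤ n := by exact_mod_cast hn1
  rw [Real.norm_natCast, Real.norm_of_nonneg (Real.log_nonneg hn1)] at hn
  rw [Real.le_rpow_iff_log_le (by positivity) (by linarith), Real.log_pow]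
  calc (a n : ℝ) * Real.log c ≤ δ / Real.log c * Real.log n * Real.log c := by gcongr
    _ = δ * Real.log n := by field_simp

theorem eventually_mul_four_pow_mul_succ_le {ε : ℝ} (hε0 : 0 < ε) (hε1 : ε ≤ 1) {a b : ℕ → ℕ}
    (ha : (fun n : ℕ => (a n : ℝ)) =o[atTop] fun n : ℕ => Real.log n)
    (hb : (fun n : ℕ => (b n : ℝ)) =o[atTop] fun n : ℕ => (n : ℝ) ^ (1 - ε)) (C : ℕ) :
    ∀ᶠ n : ℕ in atTop, C * 4 ^ a n * (b n + 1) ≤ n := by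
  have hgrow : Tendsto (fun n : ℕ => (n : ℝ) ^ (ε / 2)) atTop atTop :=
    (tendsto_rpow_atTop (half_pos hε0)).comp tendsto_natCast_atTop_atTop
  filter_upwards [eventually_pow_le_rpow_of_isLittleO_log ha (by norm_num : (1 : ℝ) < 4)
    (half_pos hε0), hb.def one_pos, hgrow.eventually_ge_atTop (2 * C),
    eventually_ge_atTop 1] with n h4 hbn hlarge hn1
  have hn1 : (1 : ℝ) ≤ n := by exact_mod_cast hn1
  have hY : 1 ≤ (n : ℝ) ^ (1 - ε) := Real.one_le_rpow hn1 (by linarith)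
  rw [Real.norm_natCast, Real.norm_of_nonneg (by positivity), one_mul] at hbn
  have hsplit : (n : ℝ) ^ (ε / 2) * (n : ℝ) ^ (ε / 2) * (n : ℝ) ^ (1 - ε) = n := by
    rw [← Real.rpow_add (by positivity), ← Real.rpow_add (by positivity)]
    ring_nf
    exact Real.rpow_one _
  suffices (C * 4 ^ a n * (b n + 1) : ℝ) ≤ n by exact_mod_cast this
  calc (C * 4 ^ a n * (b n + 1) : ℝ) ≤ C * (n : ℝ) ^ (ε / 2) * (2 * (n : ℝ) ^ (1 - ε)) := by
        gcongr; linarith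
    _ = 2 * C * (n : ℝ) ^ (ε / 2) * (n : ℝ) ^ (1 - ε) := by ring
    _ ≤ (n : ℝ) ^ (ε / 2) * (n : ℝ) ^ (ε / 2) * (n : ℝ) ^ (1 - ε) := by gcongr
    _ = n := hsplit

/-- **Majority is BAPO-hard.** Fix `ε ∈ (0,1)` and functions `a, b : ℕ → ℕ` with
`a(n) = o(log n)` and `b(n) = o(n^{1-ε})`. Then for all sufficiently large `n`,
there is no `(a(n), b(n))`-BAPO solving `Majority` (does a bit-string contain
strictly more ones than zeros?) on all inputs of length `n`. -/
theorem majority_hard (ε : ℝ) (hε0 : 0 < ε) (hε1 : ε < 1) (a b : ℕ → ℕ)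
    (ha : (fun n : ℕ => (a n : ℝ)) =o[atTop] fun n : ℕ => Real.log n)
    (hb : (fun n : ℕ => (b n : ℝ)) =o[atTop] fun n : ℕ => (n : ℝ) ^ (1 - ε)) :
    ∀ᶠ n in atTop,
      ¬ ∃ M : BAPO Bool Bool (a n) (b n),
        ∀ x : List Bool, x.length = n →
          M.SolvesOn x (decide (x.count false < x.count true)) := by
  filter_upwards [eventually_mul_four_pow_mul_succ_le hε0 hε1.le ha hb 16] with n hn
  exact not_exists_solvesOn_majority hn
end

section
/- Fix functions a, b : ℕ → ℕ with a(n) = o(log log n) and b(n) = o(n / log n). Then for all sufficiently large n, there is no (a(n), b(n))-BAPO that solves Majority on all inputs of length n. -/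
open Finset Filter Asymptotics

/-!
An adversary fixes the prefix bit by bit. For one suffix, it suffices to fix at most `b` prefix
positions to make the attended set the same for all prefixes consistent with the fixed bits;
doing this for the `m + 1` suffixes `1^s 0^(m-s)`, `m = 2^a`, fixes at most `b (m + 1)`
positions. The remaining free positions still realise `m + 1` consecutive numbers of ones
around `n / 2`, so two such prefixes with different numbers of ones `t < t'` get the same
`a`-bit oracle output. A suitable suffix makes the majority differ on the two inputs while the
suffix oracle sees identical data. The asymptotic hypotheses give `2 (b + 1) (m + 1) ≤ n`.
-/

open Set (EqOn)

namespace BAPO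

variable {Sigma Out : Type} {a b k : ℕ}

theorem mem_cands_ofFn (M : BAPO Sigma Out a b) (u : Fin k → Sigma) (suf : List Sigma)
    (p : Sigma × ℕ) :
    p ∈ M.cands (List.ofFn u) suf ↔
      ∃ i : Fin k, M.g suf k (u i) (i + 1) = true ∧ (u i, (i : ℕ) + 1) = p := by
  simp only [cands, mem_image, mem_filter, mem_univ, true_and, List.length_ofFn, List.get_ofFn]
  exact ⟨fun ⟨i, h⟩ => ⟨_, h⟩, fun ⟨i, h⟩ => ⟨⟨i, by simp⟩, h⟩⟩

open Classical in
noncomputable def attendable (M : BAPO Sigma Out a b) (suf : List Sigma) (D : Finset (Fin k))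
    (v : Fin k → Sigma) : Finset (Fin k) :=
  {i | ∃ c, (i ∈ D → c = v i) ∧ M.g suf k c (i + 1) = true}

theorem card_cands_ofFn_le_card_attendable (M : BAPO Sigma Out a b) (suf : List Sigma)
    {D : Finset (Fin k)} {u v : Fin k → Sigma} (huv : EqOn u v D) :
    #(M.cands (List.ofFn u) suf) ≤ #(M.attendable suf D v) := by
  classical
  calc #(M.cands (List.ofFn u) suf)
      ≤ #((M.attendable suf D v).image fun i => (u i, (i : ℕ) + 1)) := by
        refine card_le_card fun p hp => ?_
        obtain ⟨i, hg, rfl⟩ := (M.mem_cands_ofFn u suf p).1 hp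
        exact mem_image_of_mem _ (by simpa [attendable] using ⟨u i, fun hi => huv hi, hg⟩)
    _ ≤ #(M.attendable suf D v) := card_image_le

theorem exists_eqOn_attended (M : BAPO Sigma Out a b) (suf : List Sigma) (D : Finset (Fin k))
    (v : Fin k → Sigma) :
    ∃ w : Fin k → Sigma, EqOn w v D ∧
      ∀ i ∈ M.attendable suf D v, M.g suf k (w i) (i + 1) = true := by
  classical
  choose c hcD hcg using fun i : M.attendable suf D v => by simpa [attendable] using i.2
  refine ⟨fun i => if h : i ∈ M.attendable suf D v then c ⟨i, h⟩ else v i, fun i hi => ?_,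
    fun i hi => ?_⟩
  · dsimp only
    split_ifs with h
    · exact hcD ⟨i, h⟩ hi
    · rfl
  · simpa [dif_pos hi] using hcg ⟨i, hi⟩

-- A prefix of length `k` is a word `Fin k → Sigma`; the pair `(D, v)` is a partial assignment.
def PinsAttention (M : BAPO Sigma Out a b) (D : Finset (Fin k)) (v : Fin k → Sigma)
    (suf : List Sigma) (G : Finset (Sigma × ℕ)) : Prop :=
  ∀ u : Fin k → Sigma, EqOn u v D →
    G ⊆ M.cands (List.ofFn u) suf ∧ #G = min b #(M.cands (List.ofFn u) suf)

theorem PinsAttention.mono {M : BAPO Sigma Out a b} {D D' : Finset (Fin k)}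
    {v v' : Fin k → Sigma} {suf : List Sigma} {G : Finset (Sigma × ℕ)}
    (h : M.PinsAttention D v suf G) (hD : D ⊆ D') (hv : EqOn v' v D) :
    M.PinsAttention D' v' suf G :=
  fun u hu => h u ((hu.mono (coe_subset.2 hD)).trans hv)

theorem exists_pinsAttention_extend (M : BAPO Sigma Out a b) (suf : List Sigma)
    (D : Finset (Fin k)) (v : Fin k → Sigma) :
    ∃ D' : Finset (Fin k), D ⊆ D' ∧ #D' ≤ #D + b ∧ ∃ w : Fin k → Sigma, EqOn w v D ∧
      ∃ G, M.PinsAttention D' w suf G := by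
  classical
  obtain ⟨w, hwv, hw⟩ := M.exists_eqOn_attended suf D v
  obtain ⟨P, hPA, hP⟩ := exists_subset_card_eq (min_le_right b #(M.attendable suf D v))
  refine ⟨D ∪ P, subset_union_left, (card_union_le _ _).trans (by omega), w, hwv,
    P.image fun i => (w i, (i : ℕ) + 1), fun u hu => ?_⟩
  have huw : EqOn u w P := hu.mono (by simp)
  have hsub : P.image (fun i => (w i, (i : ℕ) + 1)) ⊆ M.cands (List.ofFn u) suf := by
    intro p hp
    obtain ⟨i, hi, rfl⟩ := mem_image.1 hp
    exact (M.mem_cands_ofFn u suf _).2 ⟨i, huw hi ▸ hw i (hPA hi), by rw [huw hi]⟩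
  have hcard : #(P.image fun i => (w i, (i : ℕ) + 1)) = #P :=
    card_image_of_injective _ fun i j hij => Fin.ext (by simpa using congrArg Prod.snd hij)
  -- every compatible prefix attends all of `P` and nothing outside `attendable`
  have hle := M.card_cands_ofFn_le_card_attendable suf ((hu.mono (by simp)).trans hwv)
  have hge := card_le_card hsub
  refine ⟨hsub, ?_⟩
  omega

theorem exists_pinsAttention_forall_lt [Nonempty Sigma] (M : BAPO Sigma Out a b)
    (k : ℕ) (suf : ℕ → List Sigma) (N : ℕ) :
    ∃ (D : Finset (Fin k)) (v : Fin k → Sigma), #D ≤ b * N ∧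
      ∀ s < N, ∃ G, M.PinsAttention D v (suf s) G := by
  induction N with
  | zero => exact ⟨∅, fun _ => Classical.arbitrary Sigma, by simp, by simp⟩
  | succ N ih =>
    obtain ⟨D, v, hD, hG⟩ := ih
    obtain ⟨D', hDD', hD', w, hwv, hGN⟩ := M.exists_pinsAttention_extend (suf N) D v
    refine ⟨D', w, by rw [Nat.mul_succ]; omega, fun s hs => ?_⟩
    rcases Nat.lt_succ_iff_lt_or_eq.1 hs with hs | rfl
    · obtain ⟨G, hG⟩ := hG s hs
      exact ⟨G, hG.mono hDD' hwv⟩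
    · exact hGN

theorem SolvesOn.h_eq_of_pinsAttention {M : BAPO Sigma Out a b} {D : Finset (Fin k)}
    {u v : Fin k → Sigma} {suf : List Sigma} {G : Finset (Sigma × ℕ)} {y : Out}
    (hy : M.SolvesOn (List.ofFn u ++ suf) y) (hG : M.PinsAttention D v suf G)
    (hu : EqOn u v D) (hsuf : suf ≠ []) :
    M.h (M.f (List.ofFn u)) G suf k = y := by
  have hlen := List.length_ofFn (f := u)
  have hy := hy k (by simpa [hlen] using List.length_pos_iff.2 hsuf) G
  rw [List.take_left' hlen, List.drop_left' hlen] at hy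
  exact hy (hG u hu).1 (hG u hu).2

theorem SolvesOn.eq_of_pinsAttention {M : BAPO Sigma Out a b} {D : Finset (Fin k)}
    {v u u' : Fin k → Sigma} {suf : List Sigma} {G : Finset (Sigma × ℕ)} {y y' : Out}
    (hG : M.PinsAttention D v suf G) (hu : EqOn u v D) (hu' : EqOn u' v D)
    (hf : M.f (List.ofFn u) = M.f (List.ofFn u')) (hsuf : suf ≠ [])
    (hy : M.SolvesOn (List.ofFn u ++ suf) y) (hy' : M.SolvesOn (List.ofFn u' ++ suf) y') :
    y = y' := by
  rw [← hy.h_eq_of_pinsAttention hG hu hsuf, ← hy'.h_eq_of_pinsAttention hG hu' hsuf, hf]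

end BAPO

theorem List.count_true_ofFn_decide_mem {k : ℕ} (T : Finset (Fin k)) :
    (List.ofFn fun i => decide (i ∈ T)).count true = #T := by
  rw [← Multiset.coe_count, ← Fin.univ_val_map, Multiset.count_map, ← Finset.filter_val]
  simp

theorem exists_eqOn_count_true_eq {k : ℕ} (D : Finset (Fin k)) (v : Fin k → Bool) {t : ℕ}
    (hDt : #D ≤ t) (htD : t + #D ≤ k) :
    ∃ u : Fin k → Bool, EqOn u v D ∧ (List.ofFn u).count true = t := by
  classical
  have hsub : {i ∈ D | v i = true} ⊆ univ \ {i ∈ D | v i = false} := by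
    intro i; simp +contextual
  obtain ⟨T, hT, hTsub, hTcard⟩ := exists_subsuperset_card_eq hsub
    ((card_filter_le _ _).trans hDt)
    (by rw [card_sdiff_of_subset (subset_univ _), card_univ, Fintype.card_fin]
        have := card_filter_le D (fun i => v i = false); omega)
  refine ⟨fun i => decide (i ∈ T), fun i hi => ?_,
    by rw [List.count_true_ofFn_decide_mem, hTcard]⟩
  replace hi : i ∈ D := hi
  cases hvi : v i
  · have : i ∉ T := fun h => (mem_sdiff.1 (hTsub h)).2 (by simp [hi, hvi])
    simpa using this
  · simpa using hT (by simp [hi, hvi])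

theorem List.count_false_lt_count_true_iff (x : List Bool) :
    x.count false < x.count true ↔ x.length < 2 * x.count true := by
  have := x.count_false_add_count_true
  omega

def onesThenZeros (m s : ℕ) : List Bool :=
  List.replicate s true ++ List.replicate (m - s) false

theorem count_true_onesThenZeros (m s : ℕ) : (onesThenZeros m s).count true = s := by
  simp [onesThenZeros, List.count_replicate]

theorem length_onesThenZeros {m s : ℕ} (h : s ≤ m) : (onesThenZeros m s).length = m := by
  simp [onesThenZeros, h]

namespace BAPO

variable {a b : ℕ}

theorem count_true_eq_of_f_eq_of_solvesOn_majority {M : BAPO Bool Bool a b} {k m : ℕ}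
    (hM : ∀ x : List Bool, x.length = k + m →
      M.SolvesOn x (decide (x.count false < x.count true)))
    {D : Finset (Fin k)} {v : Fin k → Bool}
    (hpins : ∀ s < m + 1, ∃ G, M.PinsAttention D v (onesThenZeros m s) G)
    {u u' : Fin k → Bool} (hu : EqOn u v D) (hu' : EqOn u' v D)
    (ht : (List.ofFn u).count true ∈ Icc ((k + m) / 2 + 1 - m) ((k + m) / 2 + 1))
    (ht' : (List.ofFn u').count true ∈ Icc ((k + m) / 2 + 1 - m) ((k + m) / 2 + 1))
    (hf : M.f (List.ofFn u) = M.f (List.ofFn u')) :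
    (List.ofFn u).count true = (List.ofFn u').count true := by
  by_contra hne
  wlog hlt : (List.ofFn u).count true < (List.ofFn u').count true generalizing u u'
  · exact this hu' hu ht' ht hf.symm (Ne.symm hne) (by omega)
  rw [mem_Icc] at ht ht'
  -- the suffix that tips the majority exactly for the prefix with more ones
  set s := (k + m) / 2 + 1 - (List.ofFn u').count true
  obtain ⟨G, hG⟩ := hpins s (by omega)
  have hlen : ∀ w : Fin k → Bool, (List.ofFn w ++ onesThenZeros m s).length = k + m := by
    intro w; rw [List.length_append, List.length_ofFn, length_onesThenZeros (by omega)]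
  have hne : onesThenZeros m s ≠ [] := by
    rw [← List.length_pos_iff, length_onesThenZeros (by omega)]; omega
  have hout := SolvesOn.eq_of_pinsAttention hG hu hu' hf hne (hM _ (hlen u)) (hM _ (hlen u'))
  simp only [decide_eq_decide, List.count_false_lt_count_true_iff] at hout
  simp only [hlen, List.count_append, count_true_onesThenZeros] at hout
  omega

end BAPO

theorem eventually_two_pow_le_log {a : ℕ → ℕ}
    (ha : (fun n : ℕ => (a n : ℝ)) =o[atTop] fun n : ℕ => Real.log (Real.log n)) :
    ∀ᶠ n : ℕ in atTop, (2 : ℝ) ^ a n ≤ Real.log n := by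
  have hlog : ∀ᶠ n : ℕ in atTop, 1 ≤ Real.log n :=
    tendsto_natCast_atTop_atTop.eventually (Real.tendsto_log_atTop.eventually_ge_atTop 1)
  filter_upwards [ha.bound (inv_pos.2 (Real.log_pos one_lt_two)), hlog] with n han hn
  have hloglog : 0 ≤ Real.log (Real.log n) := Real.log_nonneg hn
  rw [Real.norm_natCast, Real.norm_of_nonneg hloglog, ← div_eq_inv_mul,
    le_div_iff₀ (Real.log_pos one_lt_two)] at han
  exact (Real.pow_le_iff_le_log two_pos (by positivity)).2 han

theorem isBigO_two_pow_add_one_log {a : ℕ → ℕ}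
    (ha : (fun n : ℕ => (a n : ℝ)) =o[atTop] fun n : ℕ => Real.log (Real.log n)) :
    (fun n : ℕ => (2 : ℝ) ^ a n + 1) =O[atTop] fun n : ℕ => Real.log n := by
  refine IsBigO.add (IsBigO.of_bound' ?_)
    (Real.isLittleO_const_log_atTop.comp_tendsto tendsto_natCast_atTop_atTop).isBigO
  filter_upwards [eventually_two_pow_le_log ha, eventually_ge_atTop 1] with n hn hn1
  rw [Real.norm_of_nonneg (by positivity), Real.norm_of_nonneg (Real.log_natCast_nonneg n)]
  exact hn

theorem eventually_two_mul_succ_mul_le (a b : ℕ → ℕ)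
    (ha : (fun n : ℕ => (a n : ℝ)) =o[atTop] fun n : ℕ => Real.log (Real.log n))
    (hb : (fun n : ℕ => (b n : ℝ)) =o[atTop] fun n : ℕ => (n : ℝ) / Real.log n) :
    ∀ᶠ n in atTop, 2 * ((b n + 1) * (2 ^ a n + 1)) ≤ n := by
  have hm := isBigO_two_pow_add_one_log ha
  have hlog_o : (fun n : ℕ => Real.log n) =o[atTop] fun n : ℕ => (n : ℝ) :=
    Real.isLittleO_log_id_atTop.comp_tendsto tendsto_natCast_atTop_atTop
  have hprod : (fun n : ℕ => (b n : ℝ) * (2 ^ a n + 1)) =o[atTop] fun n : ℕ => (n : ℝ) := by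
    refine (hb.mul_isBigO hm).congr' EventuallyEq.rfl ?_
    filter_upwards [eventually_ge_atTop 2] with n hn
    have : Real.log n ≠ 0 := (Real.log_pos (by exact_mod_cast hn)).ne'
    exact div_mul_cancel₀ _ this
  have hsum := hprod.add (hm.trans_isLittleO hlog_o)
  filter_upwards [hsum.bound (by norm_num : (0 : ℝ) < 1 / 2)] with n hn
  rw [Real.norm_of_nonneg (by positivity), Real.norm_natCast] at hn
  have : (2 * ((b n + 1) * (2 ^ a n + 1)) : ℝ) ≤ n := by linarith
  exact_mod_cast this

/-- **Majority is hard even with near-linear attention.** Fix functions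
`a, b : ℕ → ℕ` with `a(n) = o(log log n)` and `b(n) = o(n / log n)`. Then for all
sufficiently large `n`, there is no `(a(n), b(n))`-BAPO solving `Majority`
on all inputs of length `n`. -/
theorem majority_hard_near_linear_attention (a b : ℕ → ℕ)
    (ha : (fun n : ℕ => (a n : ℝ)) =o[atTop] fun n : ℕ => Real.log (Real.log n))
    (hb : (fun n : ℕ => (b n : ℝ)) =o[atTop] fun n : ℕ => (n : ℝ) / Real.log n) :
    ∀ᶠ n in atTop,
      ¬ ∃ M : BAPO Bool Bool (a n) (b n),
        ∀ x : List Bool, x.length = n →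
          M.SolvesOn x (decide (x.count false < x.count true)) := by
  filter_upwards [eventually_two_mul_succ_mul_le a b ha hb] with n hn
  rintro ⟨M, hM⟩
  set m := 2 ^ a n
  rw [add_one_mul] at hn
  obtain ⟨k, hk⟩ : ∃ k, k + m = n := ⟨n - m, by omega⟩
  obtain ⟨D, v, hD, hpins⟩ := M.exists_pinsAttention_forall_lt k (onesThenZeros m) (m + 1)
  set W := Icc ((k + m) / 2 + 1 - m) ((k + m) / 2 + 1)
  have hcomplete (t : W) : ∃ u, EqOn u v D ∧ (List.ofFn u).count true = t := by
    have := mem_Icc.1 t.2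
    exact exists_eqOn_count_true_eq D v (by omega) (by omega)
  choose u hu hcount using hcomplete
  obtain ⟨t, t', hne, hf⟩ := Fintype.exists_ne_map_eq_of_card_lt
    (fun t : W => M.f (List.ofFn (u t))) (by simp [W]; omega)
  refine hne (Subtype.ext ?_)
  rw [← hcount t, ← hcount t']
  exact M.count_true_eq_of_f_eq_of_solvesOn_majority (fun x hx => hM x (hx.trans hk)) hpins
    (hu t) (hu t') (hcount t ▸ t.2) (hcount t' ▸ t'.2) hf
end
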